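/- arXiv:2104.01144 — 3 statements merged into one kernel-verified Lean document; each statement's English description precedes it below -/
import Mathlib

section
/- Let (Ω,𝓐,P) be a probability space, n ≥ 1, and X₁,…,Xₙ : Ω → ℝ random variables. Assume the concentration hypothesis (C): there are constants c > 0, Δ > 0 and H ∈ (0,1), with a_H := max(2H,1) and b_H := min(1, 2−2H), such that for every function F : ℝⁿ → ℝ that is Lipschitz with respect to the distance d₁ (with Lipschitz seminorm ‖F‖_Lip) and for which F(X₁,…,Xₙ) is integrable, and every r > 0, one has P(F(X₁,…,Xₙ) − E[F(X₁,…,Xₙ)] > r) ≤ exp(−r² / (c ‖F‖_Lip² n^{a_H} Δ^{−b_H})). Let 𝓕 be a nonempty family of Lipschitz functions φ : ℝ → ℝ with c_𝓕 := sup_{φ∈𝓕} ‖φ‖_Lip < ∞, such that each φ(X_i) is integrable; set ν_n(φ) := (1/n) Σ_{i=1}^n (φ(X_i) − E[φ(X_i)]), and assume Z := sup_{φ∈𝓕} |ν_n(φ)| is finite almost surely, measurable and integrable. Then for every real 𝔥 ≥ E[Z] and every r > 0, P(Z − 𝔥 > r) ≤ exp(−(r² / (c c_𝓕²)) (nΔ)^{b_H}).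 -/
/-!
The map `F x = sup_{φ ∈ 𝓕} |n⁻¹ ∑ᵢ (φ (xᵢ) - E φ(Xᵢ))|` on `ℝⁿ` is `c𝓕 / n`-Lipschitz for `d₁`,
being a supremum of such maps, and `F (X₁, …, Xₙ) = Z` almost surely. Hypothesis (C) applied to
`F` bounds `P (Z - E Z > r)`, hence `P (Z - 𝔥 > r)`, and since `a_H + b_H = 2` its exponent
`r² / (c (c𝓕 / n)² n^{a_H} Δ^{-b_H})` is `r² (nΔ)^{b_H} / (c c𝓕²)`.
-/

open MeasureTheory Real
open scoped NNReal ENNReal BigOperators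

section SupOfLipschitz

variable {α β : Type*} {S : Set β} {f : β → α → ℝ} {x y : α} {D : ℝ}

theorem BddAbove.image_of_abs_sub_le (hx : BddAbove ((f · x) '' S))
    (hf : ∀ b ∈ S, |f b y - f b x| ≤ D) : BddAbove ((f · y) '' S) := by
  obtain ⟨B, hB⟩ := hx
  refine ⟨B + D, ?_⟩
  rintro _ ⟨b, hb, rfl⟩
  have hbx : f b x ≤ B := hB ⟨b, hb, rfl⟩
  linarith [(abs_sub_le_iff.1 (hf b hb)).1]

theorem csSup_image_le_csSup_image_add (hS : S.Nonempty) (hx : BddAbove ((f · x) '' S))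
    (hf : ∀ b ∈ S, f b y ≤ f b x + D) : sSup ((f · y) '' S) ≤ sSup ((f · x) '' S) + D := by
  refine csSup_le (hS.image _) ?_
  rintro _ ⟨b, hb, rfl⟩
  exact (hf b hb).trans (add_le_add_left (le_csSup hx ⟨b, hb, rfl⟩) D)

theorem abs_csSup_image_sub_csSup_image_le (hS : S.Nonempty) (hx : BddAbove ((f · x) '' S))
    (hf : ∀ b ∈ S, |f b y - f b x| ≤ D) :
    |sSup ((f · y) '' S) - sSup ((f · x) '' S)| ≤ D := by
  have hy := hx.image_of_abs_sub_le hf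
  rw [abs_sub_le_iff]
  constructor
  · linarith [csSup_image_le_csSup_image_add hS hx fun b hb =>
      sub_le_iff_le_add'.1 (abs_sub_le_iff.1 (hf b hb)).1]
  · linarith [csSup_image_le_csSup_image_add hS hy fun b hb =>
      sub_le_iff_le_add'.1 (abs_sub_le_iff.1 (hf b hb)).2]

end SupOfLipschitz

/-- The paper's `ν_n(φ)` evaluated at a point `x` of `ℝⁿ` instead of the sample, where
`m i` stands for `E φ(Xᵢ)`. -/
noncomputable def centeredMean {n : ℕ} (φ : ℝ → ℝ) (m x : Fin n → ℝ) : ℝ :=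
  (n : ℝ)⁻¹ * ∑ i, (φ (x i) - m i)

theorem LipschitzWith.abs_centeredMean_sub_le {n : ℕ} {φ : ℝ → ℝ} {K : ℝ≥0}
    (hφ : LipschitzWith K φ) (m x y : Fin n → ℝ) :
    |centeredMean φ m y - centeredMean φ m x| ≤ K / n * ∑ i, |y i - x i| := by
  have hdiff : centeredMean φ m y - centeredMean φ m x = (n : ℝ)⁻¹ * ∑ i, (φ (y i) - φ (x i)) := by
    simp only [centeredMean, ← mul_sub, ← Finset.sum_sub_distrib, sub_sub_sub_cancel_right]
  rw [hdiff, abs_mul, abs_inv, Nat.abs_cast, div_eq_inv_mul, mul_assoc, Finset.mul_sum]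
  gcongr
  refine (Finset.abs_sum_le_sum_abs _ _).trans (Finset.sum_le_sum fun i _ => ?_)
  simpa only [Real.dist_eq] using hφ.dist_le_mul (y i) (x i)

theorem abs_csSup_abs_centeredMean_sub_le {n : ℕ} {𝓕 : Set (ℝ → ℝ)} {K : ℝ≥0}
    (hLip : ∀ φ ∈ 𝓕, LipschitzWith K φ) (h𝓕 : 𝓕.Nonempty) (m : (ℝ → ℝ) → Fin n → ℝ)
    {x₀ : Fin n → ℝ} (hx₀ : BddAbove ((fun φ => |centeredMean φ (m φ) x₀|) '' 𝓕))
    (x y : Fin n → ℝ) :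
    |sSup ((fun φ => |centeredMean φ (m φ) y|) '' 𝓕)
        - sSup ((fun φ => |centeredMean φ (m φ) x|) '' 𝓕)| ≤ K / n * ∑ i, |y i - x i| := by
  have hf (u v : Fin n → ℝ) : ∀ φ ∈ 𝓕, |(|centeredMean φ (m φ) v| - |centeredMean φ (m φ) u|)|
      ≤ K / n * ∑ i, |v i - u i| := fun φ hφ =>
    (abs_abs_sub_abs_le_abs_sub _ _).trans ((hLip φ hφ).abs_centeredMean_sub_le (m φ) u v)
  set f := fun φ z => |centeredMean φ (m φ) z|
  exact abs_csSup_image_sub_csSup_image_le (f := f) h𝓕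
    (hx₀.image_of_abs_sub_le (f := f) (hf x₀ x)) (hf x y)

theorem neg_sq_div_mul_div_sq_mul_rpow_eq {c K N Δ a b r : ℝ} (hN : 0 < N) (hΔ : 0 < Δ)
    (hab : a + b = 2) :
    -(r ^ 2) / (c * (K / N) ^ 2 * N ^ a * Δ ^ (-b)) = -(r ^ 2 / (c * K ^ 2)) * (N * Δ) ^ b := by
  have hNa : N ^ a = N ^ 2 * N ^ (-b) := by
    rw [← rpow_natCast, ← rpow_add hN]; congr 1; push_cast; linarith
  have hden : c * (K / N) ^ 2 * N ^ a * Δ ^ (-b) = c * K ^ 2 / (N * Δ) ^ b := by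
    rw [hNa, rpow_neg hN.le, rpow_neg hΔ.le, mul_rpow hN.le hΔ.le]
    field_simp
  rw [hden, neg_div, neg_mul, div_div_eq_mul_div, div_mul_eq_mul_div]

theorem supremum_empirical_process_concentration_general
    {Ω : Type*} [MeasurableSpace Ω] (P : Measure Ω) [IsProbabilityMeasure P]
    (n : ℕ) (hn : 1 ≤ n) (X : Fin n → Ω → ℝ)
    (c Δ H aH bH : ℝ) (hΔ : 0 < Δ)
    (haH : aH = max (2 * H) 1) (hbH : bH = min 1 (2 - 2 * H))
    -- hypothesis (C)
    (hC : ∀ (F : (Fin n → ℝ) → ℝ) (K : ℝ≥0),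
        (∀ x y : Fin n → ℝ, |F y - F x| ≤ (K : ℝ) * ∑ i, |y i - x i|) →
        Integrable (fun ω => F (fun i => X i ω)) P →
        ∀ r > (0 : ℝ),
          P {ω | F (fun i => X i ω) - ∫ ω', F (fun i => X i ω') ∂P > r}
            ≤ ENNReal.ofReal
                (Real.exp (-(r ^ 2) / (c * (K : ℝ) ^ 2 * (n : ℝ) ^ aH * Δ ^ (-bH)))))
    -- the family 𝓕 of Lipschitz functions, with uniform Lipschitz bound c𝓕
    (𝓕 : Set (ℝ → ℝ)) (c𝓕 : ℝ≥0)
    (hLip : ∀ φ ∈ 𝓕, LipschitzWith c𝓕 φ)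
    -- Z = sup_{φ ∈ 𝓕} |ν_n(φ)|, assumed (a.s.) finite, and integrable
    (Z : Ω → ℝ)
    (hZ : ∀ᵐ ω ∂P, IsLUB
      ((fun φ : ℝ → ℝ =>
          |(n : ℝ)⁻¹ * ∑ i, (φ (X i ω) - ∫ ω', φ (X i ω') ∂P)|) '' 𝓕) (Z ω))
    (hZint : Integrable Z P)
    (𝔥 : ℝ) (h𝔥 : ∫ ω, Z ω ∂P ≤ 𝔥) :
    ∀ r > (0 : ℝ),
      P {ω | Z ω - 𝔥 > r}
        ≤ ENNReal.ofReal
            (Real.exp (-(r ^ 2 / (c * (c𝓕 : ℝ) ^ 2)) * ((n : ℝ) * Δ) ^ bH)) := by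
  intro r hr
  set m : (ℝ → ℝ) → Fin n → ℝ := fun φ i => ∫ ω, φ (X i ω) ∂P
  set F : (Fin n → ℝ) → ℝ := fun x => sSup ((fun φ => |centeredMean φ (m φ) x|) '' 𝓕)
  obtain ⟨ω₀, hω₀⟩ := hZ.exists
  have hF_lip (x y : Fin n → ℝ) : |F y - F x| ≤ ((c𝓕 / n : ℝ≥0) : ℝ) * ∑ i, |y i - x i| := by
    rw [NNReal.coe_div, NNReal.coe_natCast]
    exact abs_csSup_abs_centeredMean_sub_le hLip hω₀.nonempty.of_image m hω₀.bddAbove x y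
  have hFX : ∀ᵐ ω ∂P, F (fun i => X i ω) = Z ω :=
    hZ.mono fun ω hω => hω.csSup_eq hω.nonempty
  have hFint : Integrable (fun ω => F (fun i => X i ω)) P :=
    hZint.congr (hFX.mono fun _ h => h.symm)
  have hEF : ∫ ω, F (fun i => X i ω) ∂P = ∫ ω, Z ω ∂P := integral_congr_ae hFX
  calc P {ω | Z ω - 𝔥 > r}
      ≤ P {ω | F (fun i => X i ω) - ∫ ω', F (fun i => X i ω') ∂P > r} := by
        refine measure_mono_ae (hFX.mono fun ω hω (hgt : Z ω - 𝔥 > r) => ?_)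
        change F _ - _ > r
        rw [hω, hEF]
        linarith
    _ ≤ _ := hC F _ hF_lip hFint r hr
    _ = _ := by
        rw [NNReal.coe_div, NNReal.coe_natCast,
          neg_sq_div_mul_div_sq_mul_rpow_eq (Nat.cast_pos.2 hn) hΔ (by grind)]

/-- Concentration inequality for the supremum of the empirical process, derived from the
concentration hypothesis (C) for Lipschitz functionals (w.r.t. the distance `d₁`) of the
sample `X₁, …, Xₙ`. -/
theorem supremum_empirical_process_concentration
    {Ω : Type*} [MeasurableSpace Ω] (P : Measure Ω) [IsProbabilityMeasure P]
    (n : ℕ) (hn : 1 ≤ n) (X : Fin n → Ω → ℝ)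
    (c Δ H aH bH : ℝ) (hc : 0 < c) (hΔ : 0 < Δ) (hH : H ∈ Set.Ioo (0 : ℝ) 1)
    (haH : aH = max (2 * H) 1) (hbH : bH = min 1 (2 - 2 * H))
    -- hypothesis (C)
    (hC : ∀ (F : (Fin n → ℝ) → ℝ) (K : ℝ≥0),
        (∀ x y : Fin n → ℝ, |F y - F x| ≤ (K : ℝ) * ∑ i, |y i - x i|) →
        Integrable (fun ω => F (fun i => X i ω)) P →
        ∀ r > (0 : ℝ),
          P {ω | F (fun i => X i ω) - ∫ ω', F (fun i => X i ω') ∂P > r}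
            ≤ ENNReal.ofReal
                (Real.exp (-(r ^ 2) / (c * (K : ℝ) ^ 2 * (n : ℝ) ^ aH * Δ ^ (-bH)))))
    -- the family 𝓕 of Lipschitz functions, with uniform Lipschitz bound c𝓕
    (𝓕 : Set (ℝ → ℝ)) (h𝓕 : 𝓕.Nonempty) (c𝓕 : ℝ≥0)
    (hLip : ∀ φ ∈ 𝓕, LipschitzWith c𝓕 φ)
    (hInt : ∀ φ ∈ 𝓕, ∀ i, Integrable (fun ω => φ (X i ω)) P)
    -- Z = sup_{φ ∈ 𝓕} |ν_n(φ)|, assumed (a.s.) finite, and integrable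
    (Z : Ω → ℝ)
    (hZ : ∀ᵐ ω ∂P, IsLUB
      ((fun φ : ℝ → ℝ =>
          |(n : ℝ)⁻¹ * ∑ i, (φ (X i ω) - ∫ ω', φ (X i ω') ∂P)|) '' 𝓕) (Z ω))
    (hZint : Integrable Z P)
    (𝔥 : ℝ) (h𝔥 : ∫ ω, Z ω ∂P ≤ 𝔥) :
    ∀ r > (0 : ℝ),
      P {ω | Z ω - 𝔥 > r}
        ≤ ENNReal.ofReal
            (Real.exp (-(r ^ 2 / (c * (c𝓕 : ℝ) ^ 2)) * ((n : ℝ) * Δ) ^ bH)) :=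
  supremum_empirical_process_concentration_general P n hn X c Δ H aH bH hΔ haH hbH hC 𝓕 c𝓕 hLip Z hZ
    hZint 𝔥 h𝔥
end

section
/- Let I ⊆ ℝ be an interval and φ₁,…,φ_m : ℝ → ℝ bounded Lipschitz functions vanishing outside I that form an orthonormal family of L²(I,dx); set L(m) := Σ_{j=1}^m ‖φⱼ‖_Lip² and let S_m be the linear span of φ₁,…,φ_m. Let X₁,…,Xₙ be identically distributed real random variables whose common law has a density f with respect to Lebesgue measure, with f ∈ L²(ℝ,dx). Assume the concentration hypothesis (C'): there are constants c > 0, Δ > 0 and H ∈ (0,1), with b_H := min(1, 2−2H), such that for every Lipschitz ψ : ℝ → ℝ with ψ(X₁) integrable and every r > 0, P( |(1/n) Σ_{i=1}^n (ψ(X_i) − E[ψ(X_i)])| > r ) ≤ 2 exp(−(r² / (c ‖ψ‖_Lip²)) (nΔ)^{b_H}). Let f̂_m := Σ_{j=1}^m θ̂ⱼ φⱼ with θ̂ⱼ := (1/n) Σ_{i=1}^n φⱼ(X_i) be the projection estimator. Then E[ ∫_I (f̂_m(x) − f(x))² dx ] ≤ min_{t ∈ S_m} ∫_I (t(x) − f(x))²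 dx + 2c · m·L(m) / (nΔ)^{b_H}. -/
/-!
Expanding in the orthonormal family gives, for every coefficient vector `b`,
`∫_I (∑ b_j φ_j - f)² = ∫_I f² - ∑ θ_j² + ∑ (b_j - θ_j)²` with `θ_j = ∫_I φ_j f`, so the risk is the
bias term plus `∑ E (θ̂_j - θ_j)²`. Since `f` is the density of each `X_i`, `E φ_j(X_i) = θ_j`, and
(C') applied to `ψ = φ_j` gives a sub-Gaussian tail for `θ̂_j - θ_j`; integrating it
(`E Z² = ∫₀^∞ P(Z² > t) dt`) bounds each variance by `2 c ‖φ_j‖_Lip² / (nΔ)^{b_H}`.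
-/

open MeasureTheory Real
open scoped NNReal ENNReal

section OrthonormalExpansion

variable {α ι : Type*} [MeasurableSpace α] {μ : Measure α}

lemma integral_sub_sq {u v : α → ℝ} (hu : MemLp u 2 μ) (hv : MemLp v 2 μ) :
    ∫ x, (u x - v x) ^ 2 ∂μ = ∫ x, u x ^ 2 ∂μ - 2 * ∫ x, u x * v x ∂μ + ∫ x, v x ^ 2 ∂μ := by
  have huv : Integrable (fun x => 2 * (u x * v x)) μ := (hu.integrable_mul hv).const_mul 2
  have hsub : Integrable (fun x => u x ^ 2 - 2 * (u x * v x)) μ := hu.integrable_sq.sub huv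
  simp_rw [sub_sq, mul_assoc]
  rw [integral_add hsub hv.integrable_sq, integral_sub hu.integrable_sq huv, integral_const_mul]

variable {s : Finset ι} {φ : ι → α → ℝ}

lemma integral_sum_mul_mul {g : α → ℝ} (hφ : ∀ j ∈ s, MemLp (φ j) 2 μ) (hg : MemLp g 2 μ)
    (b : ι → ℝ) :
    ∫ x, (∑ j ∈ s, b j * φ j x) * g x ∂μ = ∑ j ∈ s, b j * ∫ x, φ j x * g x ∂μ := by
  simp_rw [Finset.sum_mul, mul_assoc]
  rw [integral_finsetSum s (f := fun j x => b j * (φ j x * g x))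
    fun j hj => ((hφ j hj).integrable_mul hg).const_mul (b j)]
  simp_rw [integral_const_mul]

lemma memLp_sum_mul (hφ : ∀ j ∈ s, MemLp (φ j) 2 μ) (b : ι → ℝ) :
    MemLp (fun x => ∑ j ∈ s, b j * φ j x) 2 μ :=
  memLp_finsetSum s fun j hj => (hφ j hj).const_mul (b j)

-- The Bochner integral of a non-integrable function is `0`.
lemma memLp_two_of_integral_mul_self_ne_zero {g : α → ℝ} (hg : AEStronglyMeasurable g μ)
    (h : ∫ x, g x * g x ∂μ ≠ 0) : MemLp g 2 μ :=
  (memLp_two_iff_integrable_sq hg).2 <| by simpa only [sq] using not_imp_comm.1 integral_undef h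

variable [DecidableEq ι]

lemma integral_sum_mul_sq_of_orthonormal (hφ : ∀ j ∈ s, MemLp (φ j) 2 μ)
    (horth : ∀ j ∈ s, ∀ k ∈ s, ∫ x, φ j x * φ k x ∂μ = if j = k then 1 else 0) (b : ι → ℝ) :
    ∫ x, (∑ j ∈ s, b j * φ j x) ^ 2 ∂μ = ∑ j ∈ s, b j ^ 2 := by
  simp_rw [sq, integral_sum_mul_mul hφ (memLp_sum_mul hφ b) b]
  refine Finset.sum_congr rfl fun j hj => ?_
  simp_rw [mul_comm (φ j _), integral_sum_mul_mul hφ (hφ j hj) b]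
  rw [Finset.sum_congr rfl fun k hk => by rw [horth k hk j hj]]
  simp [hj]

theorem integral_sum_mul_sub_sq_of_orthonormal {g : α → ℝ} (hφ : ∀ j ∈ s, MemLp (φ j) 2 μ)
    (horth : ∀ j ∈ s, ∀ k ∈ s, ∫ x, φ j x * φ k x ∂μ = if j = k then 1 else 0)
    (hg : MemLp g 2 μ) (b : ι → ℝ) :
    ∫ x, (∑ j ∈ s, b j * φ j x - g x) ^ 2 ∂μ
      = ∫ x, g x ^ 2 ∂μ - ∑ j ∈ s, (∫ x, φ j x * g x ∂μ) ^ 2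
        + ∑ j ∈ s, (b j - ∫ x, φ j x * g x ∂μ) ^ 2 := by
  rw [integral_sub_sq (memLp_sum_mul hφ b) hg, integral_sum_mul_sq_of_orthonormal hφ horth,
    integral_sum_mul_mul hφ hg]
  simp_rw [sub_sq, Finset.sum_add_distrib, Finset.sum_sub_distrib, Finset.mul_sum]
  ring_nf

theorem integral_integral_sum_mul_sub_sq_of_orthonormal {Ω : Type*} [MeasurableSpace Ω]
    {P : Measure Ω} [IsProbabilityMeasure P] {g : α → ℝ} (hφ : ∀ j ∈ s, MemLp (φ j) 2 μ)
    (horth : ∀ j ∈ s, ∀ k ∈ s, ∫ x, φ j x * φ k x ∂μ = if j = k then 1 else 0)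
    (hg : MemLp g 2 μ) {β : ι → Ω → ℝ}
    (hβ : ∀ j ∈ s, Integrable (fun ω => (β j ω - ∫ x, φ j x * g x ∂μ) ^ 2) P) :
    ∫ ω, ∫ x, (∑ j ∈ s, β j ω * φ j x - g x) ^ 2 ∂μ ∂P
      = ∫ x, g x ^ 2 ∂μ - ∑ j ∈ s, (∫ x, φ j x * g x ∂μ) ^ 2
        + ∑ j ∈ s, ∫ ω, (β j ω - ∫ x, φ j x * g x ∂μ) ^ 2 ∂P := by
  simp_rw [integral_sum_mul_sub_sq_of_orthonormal hφ horth hg]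
  rw [integral_add (integrable_const _) (integrable_finsetSum _ hβ), integral_finsetSum _ hβ,
    integral_const, probReal_univ, one_smul]

end OrthonormalExpansion

section SubgaussianTail

variable {Ω : Type*} [MeasurableSpace Ω] {P : Measure Ω} {Z : Ω → ℝ} {α : ℝ}

lemma lintegral_sq_le_of_tail (hZ : AEMeasurable Z P) (hα : 0 < α)
    (htail : ∀ r > 0, P {ω | r < |Z ω|} ≤ ENNReal.ofReal (2 * exp (-α * r ^ 2))) :
    ∫⁻ ω, ENNReal.ofReal (Z ω ^ 2) ∂P ≤ ENNReal.ofReal (2 / α) := by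
  have hexp : IntegrableOn (fun t => 2 * exp (-α * t)) (Set.Ioi 0) :=
    (integrableOn_exp_mul_Ioi (neg_lt_zero.2 hα) 0).const_mul 2
  calc ∫⁻ ω, ENNReal.ofReal (Z ω ^ 2) ∂P = ∫⁻ t in Set.Ioi 0, P {ω | t < Z ω ^ 2} :=
        lintegral_eq_lintegral_meas_lt P (.of_forall fun ω => sq_nonneg _) (hZ.pow_const 2)
    _ ≤ ∫⁻ t in Set.Ioi 0, ENNReal.ofReal (2 * exp (-α * t)) := by
        refine setLIntegral_mono' measurableSet_Ioi fun t (ht : 0 < t) => ?_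
        have hset : {ω | t < Z ω ^ 2} = {ω | √t < |Z ω|} := by
          ext ω
          simp only [Set.mem_ofPred_eq, ← sqrt_sq_eq_abs, sqrt_lt_sqrt_iff ht.le]
        simpa [hset, sq_sqrt ht.le] using htail (√t) (sqrt_pos.2 ht)
    _ = ENNReal.ofReal (2 / α) := by
        rw [← ofReal_integral_eq_lintegral_ofReal hexp (.of_forall fun t => by positivity),
          integral_const_mul, integral_exp_mul_Ioi (neg_lt_zero.2 hα)]
        congr 1
        field_simp
        simp

lemma integrable_sq_of_tail (hZ : AEMeasurable Z P) (hα : 0 < α)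
    (htail : ∀ r > 0, P {ω | r < |Z ω|} ≤ ENNReal.ofReal (2 * exp (-α * r ^ 2))) :
    Integrable (fun ω => Z ω ^ 2) P := by
  refine ⟨(hZ.pow_const 2).aestronglyMeasurable, ?_⟩
  rw [hasFiniteIntegral_iff_ofReal (.of_forall fun ω => sq_nonneg _)]
  exact (lintegral_sq_le_of_tail hZ hα htail).trans_lt ENNReal.ofReal_lt_top

lemma integral_sq_le_of_tail (hZ : AEMeasurable Z P) (hα : 0 < α)
    (htail : ∀ r > 0, P {ω | r < |Z ω|} ≤ ENNReal.ofReal (2 * exp (-α * r ^ 2))) :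
    ∫ ω, Z ω ^ 2 ∂P ≤ 2 / α := by
  rw [integral_eq_lintegral_of_nonneg_ae (.of_forall fun ω => sq_nonneg _)
    (hZ.pow_const 2).aestronglyMeasurable]
  exact ENNReal.toReal_le_of_le_ofReal (by positivity) (lintegral_sq_le_of_tail hZ hα htail)

end SubgaussianTail

section EmpiricalMean

lemma inv_mul_sum_sub {n : ℕ} (hn : n ≠ 0) (y : Fin n → ℝ) (t : ℝ) :
    (n : ℝ)⁻¹ * ∑ i, y i - t = (n : ℝ)⁻¹ * ∑ i, (y i - t) := by
  rw [Finset.sum_sub_distrib, Finset.sum_const, Finset.card_univ, Fintype.card_fin, nsmul_eq_mul,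
    mul_sub, inv_mul_cancel_left₀ (Nat.cast_ne_zero.2 hn)]

variable {Ω α : Type*} [MeasurableSpace Ω] {P : Measure Ω} [IsProbabilityMeasure P]
  [PseudoEMetricSpace α] {n : ℕ} {X : Fin n → Ω → α} {ψ : α → ℝ} {θ : ℝ}

lemma inv_mul_sum_sub_eq_zero_of_lipschitzWith_zero (hn : n ≠ 0) (hψ : LipschitzWith 0 ψ)
    (hmean : ∀ i, ∫ ω, ψ (X i ω) ∂P = θ) (ω : Ω) :
    (n : ℝ)⁻¹ * ∑ i, ψ (X i ω) - θ = 0 := by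
  have hconst := (LipschitzWith.zero_iff ψ).1 hψ
  rw [inv_mul_sum_sub hn, Finset.sum_eq_zero, mul_zero]
  intro i _
  rw [← hmean i, funext fun ω' => hconst (X i ω') (X i ω), integral_const, probReal_univ,
    one_smul, sub_self]

variable [MeasurableSpace α] [OpensMeasurableSpace α]

lemma empirical_mean_sq_error_le (hn : n ≠ 0) (hX : ∀ i, Measurable (X i)) {K : ℝ≥0}
    (hψ : LipschitzWith K ψ) (hmean : ∀ i, ∫ ω, ψ (X i ω) ∂P = θ) {c D : ℝ} (hc : 0 < c)
    (hD : 0 < D)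
    (hconc : ∀ r > 0, P {ω | |(n : ℝ)⁻¹ * ∑ i, (ψ (X i ω) - ∫ ω', ψ (X i ω') ∂P)| > r}
      ≤ ENNReal.ofReal (2 * exp (-(r ^ 2 / (c * K ^ 2)) * D))) :
    Integrable (fun ω => ((n : ℝ)⁻¹ * ∑ i, ψ (X i ω) - θ) ^ 2) P ∧
      ∫ ω, ((n : ℝ)⁻¹ * ∑ i, ψ (X i ω) - θ) ^ 2 ∂P ≤ 2 * c * K ^ 2 / D := by
  rcases eq_zero_or_pos K with hK | hK
  · -- (C') says nothing when `K = 0` (`r ^ 2 / 0 = 0`), but then `ψ` is constant.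
    subst hK
    simp [inv_mul_sum_sub_eq_zero_of_lipschitzWith_zero hn hψ hmean]
  have hZ : Measurable fun ω => (n : ℝ)⁻¹ * ∑ i, ψ (X i ω) - θ :=
    (measurable_const.mul (Finset.measurable_sum _ fun i _ =>
      hψ.continuous.measurable.comp (hX i))).sub_const θ
  have hα : 0 < D / (c * K ^ 2) := by positivity
  have htail : ∀ r > 0, P {ω | r < |(n : ℝ)⁻¹ * ∑ i, ψ (X i ω) - θ|}
      ≤ ENNReal.ofReal (2 * exp (-(D / (c * K ^ 2)) * r ^ 2)) := by
    intro r hr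
    convert hconc r hr using 4
    · simp_rw [inv_mul_sum_sub hn, hmean]
    · ring
  refine ⟨integrable_sq_of_tail hZ.aemeasurable hα htail,
    (integral_sq_le_of_tail hZ.aemeasurable hα htail).trans_eq ?_⟩
  field_simp

end EmpiricalMean

section Density

variable {Ω α : Type*} [MeasurableSpace Ω] [MeasurableSpace α] {P : Measure Ω} {μ : Measure α}
  {X : Ω → α} {f ψ : α → ℝ}

lemma integral_comp_eq_integral_mul_density (hX : Measurable X) (hf : Measurable f)
    (hf0 : ∀ x, 0 ≤ f x) (hlaw : P.map X = μ.withDensity fun x => ENNReal.ofReal (f x))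
    (hψ : Measurable ψ) :
    ∫ ω, ψ (X ω) ∂P = ∫ x, ψ x * f x ∂μ := by
  rw [← integral_map hX.aemeasurable hψ.aestronglyMeasurable, hlaw,
    integral_withDensity_eq_integral_toReal_smul hf.ennreal_ofReal
      (.of_forall fun _ => ENNReal.ofReal_lt_top)]
  simp_rw [ENNReal.toReal_ofReal (hf0 _), smul_eq_mul, mul_comm]

lemma integrable_comp_of_integrable_mul_density (hX : Measurable X) (hf : Measurable f)
    (hf0 : ∀ x, 0 ≤ f x) (hlaw : P.map X = μ.withDensity fun x => ENNReal.ofReal (f x))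
    (hψ : Measurable ψ) (hψf : Integrable (fun x => ψ x * f x) μ) :
    Integrable (fun ω => ψ (X ω)) P := by
  rw [← Function.comp_def, ← integrable_map_measure hψ.aestronglyMeasurable hX.aemeasurable, hlaw,
    integrable_withDensity_iff_integrable_smul' hf.ennreal_ofReal
      (.of_forall fun _ => ENNReal.ofReal_lt_top)]
  simpa only [ENNReal.toReal_ofReal (hf0 _), smul_eq_mul, mul_comm] using hψf

lemma integral_comp_eq_setIntegral_mul_density {I : Set α} (hX : Measurable X)
    (hf : Measurable f) (hf0 : ∀ x, 0 ≤ f x)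
    (hlaw : P.map X = μ.withDensity fun x => ENNReal.ofReal (f x)) (hψ : Measurable ψ)
    (hsupp : ∀ x ∉ I, ψ x = 0) :
    ∫ ω, ψ (X ω) ∂P = ∫ x in I, ψ x * f x ∂μ := by
  rw [integral_comp_eq_integral_mul_density hX hf hf0 hlaw hψ,
    setIntegral_eq_integral_of_forall_compl_eq_zero fun x hx => by simp [hsupp x hx]]

lemma integrable_comp_of_memLp_restrict {I : Set α} (hX : Measurable X) (hf : Measurable f)
    (hf0 : ∀ x, 0 ≤ f x) (hlaw : P.map X = μ.withDensity fun x => ENNReal.ofReal (f x))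
    (hψ : Measurable ψ) (hsupp : ∀ x ∉ I, ψ x = 0) (hψ2 : MemLp ψ 2 (μ.restrict I))
    (hf2 : MemLp f 2 (μ.restrict I)) :
    Integrable (fun ω => ψ (X ω)) P :=
  integrable_comp_of_integrable_mul_density hX hf hf0 hlaw hψ <|
    IntegrableOn.integrable_of_forall_notMem_eq_zero (hψ2.integrable_mul hf2)
      fun x hx => by simp [hsupp x hx]

end Density

theorem projection_estimator_risk_bound_general
    {Ω : Type*} [MeasurableSpace Ω] (P : Measure Ω) [IsProbabilityMeasure P]
    (I : Set ℝ)
    (m n : ℕ) (hn : 1 ≤ n)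
    -- the orthonormal family φ_0, …, φ_{m-1} of bounded Lipschitz functions supported in I
    (φ : ℕ → ℝ → ℝ) (K : ℕ → ℝ≥0)
    (hlip : ∀ j < m, LipschitzWith (K j) (φ j))
    (hsupp : ∀ j < m, ∀ x ∉ I, φ j x = 0)
    (horth : ∀ j < m, ∀ k < m, (∫ x in I, φ j x * φ k x) = if j = k then (1 : ℝ) else 0)
    (L : ℝ) (hL : L = ∑ j ∈ Finset.range m, (K j : ℝ) ^ 2)
    -- the identically distributed sample, with common density f ∈ L²(ℝ)
    (X : Fin n → Ω → ℝ) (hX : ∀ i, Measurable (X i))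
    (f : ℝ → ℝ) (hfmeas : Measurable f) (hf0 : ∀ x, 0 ≤ f x)
    (hlaw : ∀ i, Measure.map (X i) P = volume.withDensity fun x => ENNReal.ofReal (f x))
    (hfL2 : MemLp f 2 volume)
    -- hypothesis (C')
    (c Δ bH : ℝ) (hc : 0 < c) (hΔ : 0 < Δ)
    (hC' : ∀ (ψ : ℝ → ℝ) (Kψ : ℝ≥0), LipschitzWith Kψ ψ →
        (∀ i, Integrable (fun ω => ψ (X i ω)) P) →
        ∀ r > (0 : ℝ),
          P {ω | |(n : ℝ)⁻¹ * ∑ i, (ψ (X i ω) - ∫ ω', ψ (X i ω') ∂P)| > r}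
            ≤ ENNReal.ofReal
                (2 * Real.exp (-(r ^ 2 / (c * (Kψ : ℝ) ^ 2)) * ((n : ℝ) * Δ) ^ bH)))
    -- the projection estimator
    (fhat : Ω → ℝ → ℝ)
    (hfhat : ∀ ω x,
      fhat ω x = ∑ j ∈ Finset.range m, ((n : ℝ)⁻¹ * ∑ i, φ j (X i ω)) * φ j x) :
    ∀ a : ℕ → ℝ,
      (∫ ω, (∫ x in I, (fhat ω x - f x) ^ 2) ∂P)
        ≤ (∫ x in I, ((∑ j ∈ Finset.range m, a j * φ j x) - f x) ^ 2)
            + 2 * c * (m : ℝ) * L / ((n : ℝ) * Δ) ^ bH := by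
  intro a
  have hn0 : n ≠ 0 := Nat.one_le_iff_ne_zero.1 hn
  have hD : 0 < ((n : ℝ) * Δ) ^ bH := rpow_pos_of_pos (by positivity) _
  set θ : ℕ → ℝ := fun j => ∫ x in I, φ j x * f x
  have hφL2 : ∀ j ∈ Finset.range m, MemLp (φ j) 2 (volume.restrict I) := fun j hj =>
    have hj := Finset.mem_range.1 hj
    memLp_two_of_integral_mul_self_ne_zero (hlip j hj).continuous.aestronglyMeasurable
      (by simp [horth j hj j hj])
  have hcoef : ∀ j ∈ Finset.range m,
      Integrable (fun ω => ((n : ℝ)⁻¹ * ∑ i, φ j (X i ω) - θ j) ^ 2) P ∧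
        ∫ ω, ((n : ℝ)⁻¹ * ∑ i, φ j (X i ω) - θ j) ^ 2 ∂P ≤ 2 * c * K j ^ 2 / ((n : ℝ) * Δ) ^ bH := by
    intro j hj
    have hjm := Finset.mem_range.1 hj
    have hφmeas := (hlip j hjm).continuous.measurable
    refine empirical_mean_sq_error_le hn0 hX (hlip j hjm) (fun i =>
      integral_comp_eq_setIntegral_mul_density (hX i) hfmeas hf0 (hlaw i) hφmeas (hsupp j hjm))
      hc hD (hC' _ _ (hlip j hjm) fun i => ?_)
    exact integrable_comp_of_memLp_restrict (hX i) hfmeas hf0 (hlaw i) hφmeas (hsupp j hjm)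
      (hφL2 j hj) (hfL2.restrict I)
  have horth' : ∀ j ∈ Finset.range m, ∀ k ∈ Finset.range m,
      ∫ x in I, φ j x * φ k x = if j = k then 1 else 0 :=
    fun j hj k hk => horth j (Finset.mem_range.1 hj) k (Finset.mem_range.1 hk)
  simp_rw [hfhat]
  rw [integral_integral_sum_mul_sub_sq_of_orthonormal hφL2 horth' (hfL2.restrict I)
      fun j hj => (hcoef j hj).1,
    integral_sum_mul_sub_sq_of_orthonormal hφL2 horth' (hfL2.restrict I)]
  have hvariance : ∑ j ∈ Finset.range m, ∫ ω, ((n : ℝ)⁻¹ * ∑ i, φ j (X i ω) - θ j) ^ 2 ∂P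
      ≤ 2 * c * L / ((n : ℝ) * Δ) ^ bH := by
    rw [hL, Finset.mul_sum, Finset.sum_div]
    exact Finset.sum_le_sum fun j hj => (hcoef j hj).2
  have hbias : 0 ≤ ∑ j ∈ Finset.range m, (a j - θ j) ^ 2 :=
    Finset.sum_nonneg fun j _ => sq_nonneg _
  have hLm : 2 * c * L / ((n : ℝ) * Δ) ^ bH ≤ 2 * c * m * L / ((n : ℝ) * Δ) ^ bH := by
    rw [mul_assoc _ (m : ℝ)]
    gcongr
    rcases Nat.eq_zero_or_pos m with rfl | hmpos
    · simp [hL]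
    · exact le_mul_of_one_le_left (hL ▸ by positivity) (by exact_mod_cast hmpos)
  linarith

/-- Risk bound on the projection estimator `f̂_m` of the common density `f` of the sample
`X₁, …, Xₙ`, under the concentration hypothesis (C') for the empirical process.
The minimum over `t ∈ S_m` of the bias term is expressed by quantifying over the
coefficients `a` of an arbitrary element `t = ∑ j, a j • φ j` of `S_m`. -/
theorem projection_estimator_risk_bound
    {Ω : Type*} [MeasurableSpace Ω] (P : Measure Ω) [IsProbabilityMeasure P]
    (I : Set ℝ) (hImeas : MeasurableSet I) (hIint : I.OrdConnected)
    (m n : ℕ) (hm : 1 ≤ m) (hn : 1 ≤ n)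
    -- the orthonormal family φ_0, …, φ_{m-1} of bounded Lipschitz functions supported in I
    (φ : ℕ → ℝ → ℝ) (K : ℕ → ℝ≥0)
    (hbdd : ∀ j < m, ∃ Cb : ℝ, ∀ x, |φ j x| ≤ Cb)
    (hlip : ∀ j < m, LipschitzWith (K j) (φ j))
    (hsupp : ∀ j < m, ∀ x ∉ I, φ j x = 0)
    (horth : ∀ j < m, ∀ k < m, (∫ x in I, φ j x * φ k x) = if j = k then (1 : ℝ) else 0)
    (L : ℝ) (hL : L = ∑ j ∈ Finset.range m, (K j : ℝ) ^ 2)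
    -- the identically distributed sample, with common density f ∈ L²(ℝ)
    (X : Fin n → Ω → ℝ) (hX : ∀ i, Measurable (X i))
    (f : ℝ → ℝ) (hfmeas : Measurable f) (hf0 : ∀ x, 0 ≤ f x)
    (hlaw : ∀ i, Measure.map (X i) P = volume.withDensity fun x => ENNReal.ofReal (f x))
    (hfL2 : MemLp f 2 volume)
    -- hypothesis (C')
    (c Δ H bH : ℝ) (hc : 0 < c) (hΔ : 0 < Δ) (hH : H ∈ Set.Ioo (0 : ℝ) 1)
    (hbH : bH = min 1 (2 - 2 * H))
    (hC' : ∀ (ψ : ℝ → ℝ) (Kψ : ℝ≥0), LipschitzWith Kψ ψ →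
        (∀ i, Integrable (fun ω => ψ (X i ω)) P) →
        ∀ r > (0 : ℝ),
          P {ω | |(n : ℝ)⁻¹ * ∑ i, (ψ (X i ω) - ∫ ω', ψ (X i ω') ∂P)| > r}
            ≤ ENNReal.ofReal
                (2 * Real.exp (-(r ^ 2 / (c * (Kψ : ℝ) ^ 2)) * ((n : ℝ) * Δ) ^ bH)))
    -- the projection estimator
    (fhat : Ω → ℝ → ℝ)
    (hfhat : ∀ ω x,
      fhat ω x = ∑ j ∈ Finset.range m, ((n : ℝ)⁻¹ * ∑ i, φ j (X i ω)) * φ j x) :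
    ∀ a : ℕ → ℝ,
      (∫ ω, (∫ x in I, (fhat ω x - f x) ^ 2) ∂P)
        ≤ (∫ x in I, ((∑ j ∈ Finset.range m, a j * φ j x) - f x) ^ 2)
            + 2 * c * (m : ℝ) * L / ((n : ℝ) * Δ) ^ bH :=
  projection_estimator_risk_bound_general P I m n hn φ K hlip hsupp horth L hL X hX f hfmeas hf0
    hlaw hfL2 c Δ bH hc hΔ hC' fhat hfhat
end

section
/- Let I ⊆ ℝ be an interval, φ₁,…,φ_m : ℝ → ℝ bounded Lipschitz functions vanishing outside I and orthonormal in L²(I,dx), L(m) := Σ_{j=1}^m ‖φⱼ‖_Lip², and X₁,…,Xₙ real random variables satisfying the concentration hypothesis (C'): there are constants c > 0, Δ > 0 and H ∈ (0,1), with b_H := min(1,2−2H), such that for every Lipschitz ψ : ℝ → ℝ with ψ(X₁),…,ψ(Xₙ) integrable and every r > 0, P(|(1/n)Σ_{i=1}^n(ψ(X_i) − E[ψ(X_i)])| > r) ≤ 2 exp(−(r²/(c‖ψ‖_Lip²))(nΔ)^{b_H}). Define ν_n(φ) := (1/n)Σ_{i=1}^n (φ(X_i) − E[φ(X_i)]) and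 𝓕_m := {φ ∈ span(φ₁,…,φ_m) : ‖φ‖_{L²(I)} = 1}. Then E[ sup_{φ∈𝓕_m} ν_n(φ)² ] = Σ_{j=1}^m E[ν_n(φⱼ)²] ≤ 2c·L(m)/(nΔ)^{b_H}; in particular ( E[ sup_{φ∈𝓕_m} |ν_n(φ)| ] )² ≤ 2c·L(m)/(nΔ)^{b_H}. -/
open MeasureTheory Real
open scoped NNReal ENNReal BigOperators

/-!
On the span of the orthonormal family, `ψ = ∑ⱼ aⱼ φⱼ` has `‖ψ‖²_{L²(I)} = ∑ⱼ aⱼ²`, and `ν_n` is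
linear there, so `ν_n(ψ) = ∑ⱼ aⱼ ν_n(φⱼ)`. By Cauchy–Schwarz, with equality at `a ∝ (ν_n(φⱼ))ⱼ`,
the supremum of `ν_n(ψ)²` over the unit sphere is attained and equals `∑ⱼ ν_n(φⱼ)²` for every `ω`.
Each `E[ν_n(φⱼ)²]` is bounded by integrating the sub-Gaussian tail given by (C') in the layer-cake
formula, `E[Z²] = ∫₀^∞ P(Z² > t) dt ≤ ∫₀^∞ 2 e^{-At} dt = 2/A`. The bound on `E[sup |ν_n|]` follows
from `(E[√S])² ≤ E[S]`.
-/

theorem integral_le_of_lintegral_ofReal_le {α : Type*} [MeasurableSpace α] {μ : Measure α}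
    {f : α → ℝ} (hf : 0 ≤ᵐ[μ] f) (hfm : AEStronglyMeasurable f μ) {B : ℝ} (hB : 0 ≤ B)
    (h : ∫⁻ x, ENNReal.ofReal (f x) ∂μ ≤ ENNReal.ofReal B) : ∫ x, f x ∂μ ≤ B := by
  rw [integral_eq_lintegral_of_nonneg_ae hf hfm]
  exact ENNReal.toReal_le_of_le_ofReal hB h

theorem integrable_of_lintegral_ofReal_le {α : Type*} [MeasurableSpace α] {μ : Measure α}
    {f : α → ℝ} (hf : 0 ≤ᵐ[μ] f) (hfm : AEStronglyMeasurable f μ) {B : ℝ}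
    (h : ∫⁻ x, ENNReal.ofReal (f x) ∂μ ≤ ENNReal.ofReal B) : Integrable f μ :=
  (lintegral_ofReal_ne_top_iff_integrable hfm hf).1 (h.trans_lt ENNReal.ofReal_lt_top).ne

theorem lintegral_sq_le_of_tail_le {Ω : Type*} [MeasurableSpace Ω] {P : Measure Ω}
    {Z : Ω → ℝ} (hZ : AEMeasurable Z P) {A : ℝ} (hA : 0 < A)
    (htail : ∀ r > 0, P {ω | |Z ω| > r} ≤ ENNReal.ofReal (2 * exp (-(A * r ^ 2)))) :
    ∫⁻ ω, ENNReal.ofReal (Z ω ^ 2) ∂P ≤ ENNReal.ofReal (2 / A) := by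
  have hexp : IntegrableOn (fun t => exp (-A * t)) (Set.Ioi 0) :=
    exp_neg_integrableOn_Ioi 0 hA
  calc ∫⁻ ω, ENNReal.ofReal (Z ω ^ 2) ∂P
      = ∫⁻ t in Set.Ioi 0, P {ω | t < Z ω ^ 2} :=
        lintegral_eq_lintegral_meas_lt P (.of_forall fun ω => sq_nonneg _) (hZ.pow_const 2)
    _ ≤ ∫⁻ t in Set.Ioi 0, ENNReal.ofReal (2 * exp (-A * t)) := by
        refine setLIntegral_mono' measurableSet_Ioi fun t (ht : 0 < t) => ?_
        calc P {ω | t < Z ω ^ 2} ≤ P {ω | |Z ω| > √t} :=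
              measure_mono fun ω (hω : t < Z ω ^ 2) => by
                simpa [sqrt_sq_eq_abs] using sqrt_lt_sqrt ht.le hω
          _ ≤ _ := htail _ (sqrt_pos.2 ht)
          _ = _ := by rw [sq_sqrt ht.le, neg_mul]
    _ = ENNReal.ofReal (2 / A) := by
        rw [← ofReal_integral_eq_lintegral_ofReal (hexp.const_mul 2)
            (.of_forall fun _ => by positivity), integral_const_mul,
          integral_exp_mul_Ioi (neg_neg_iff_pos.2 hA)]
        congr 1
        field_simp
        simp

theorem isGreatest_sq_sum_mul_of_sum_sq_eq_one {ι : Type*} [Fintype ι] [Nonempty ι] (v : ι → ℝ) :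
    IsGreatest ((fun a : ι → ℝ => (∑ j, a j * v j) ^ 2) '' {a | ∑ j, a j ^ 2 = 1})
      (∑ j, v j ^ 2) := by
  classical
  refine ⟨?_, ?_⟩
  · rcases (Finset.sum_nonneg fun j _ => sq_nonneg (v j)).eq_or_lt with hv | hv
    · have hv0 : v = 0 := funext fun j => pow_eq_zero_iff two_ne_zero |>.1 <|
        congrFun ((Fintype.sum_eq_zero_iff_of_nonneg fun j => sq_nonneg (v j)).1 hv.symm) j
      obtain ⟨j₀⟩ := ‹Nonempty ι›
      exact ⟨Pi.single j₀ 1, by simp [Pi.single_apply, ite_pow], by simp [hv0]⟩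
    · refine ⟨fun j => v j / √(∑ k, v k ^ 2), ?_, ?_⟩
      · show ∑ j, (v j / √(∑ k, v k ^ 2)) ^ 2 = 1
        simp only [div_pow, sq_sqrt hv.le, ← Finset.sum_div]
        exact div_self hv.ne'
      · simp only [div_mul_eq_mul_div, ← Finset.sum_div, ← sq, div_pow, sq_sqrt hv.le]
        field_simp
  · rintro _ ⟨a, ha : ∑ j, a j ^ 2 = 1, rfl⟩
    simpa [ha] using Finset.sum_mul_sq_le_sq_mul_sq Finset.univ a v

theorem IsGreatest.abs_image_of_sq_image {β : Type*} {s : Set β} {g : β → ℝ} {M : ℝ}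
    (h : IsGreatest ((fun x => g x ^ 2) '' s) M) : IsGreatest ((fun x => |g x|) '' s) √M := by
  simpa only [Set.image_image, sqrt_sq_eq_abs] using sqrt_monotone.map_isGreatest h

theorem memLp_two_of_integral_mul_self_ne_zero_s11 {α : Type*} [MeasurableSpace α] {μ : Measure α}
    {f : α → ℝ} (hf : AEStronglyMeasurable f μ) (h : ∫ x, f x * f x ∂μ ≠ 0) : MemLp f 2 μ :=
  (memLp_two_iff_integrable_sq hf).2 <| by simpa only [sq] using Integrable.of_integral_ne_zero h

section Orthonormal

variable {α ι : Type*} [MeasurableSpace α] {μ : Measure α} [Fintype ι] [DecidableEq ι]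
  {f : ι → α → ℝ}

theorem integral_sq_sum_smul_of_orthonormal (hf : ∀ j, MemLp (f j) 2 μ)
    (horth : ∀ j k, ∫ x, f j x * f k x ∂μ = if j = k then 1 else 0) (a : ι → ℝ) :
    ∫ x, (∑ j, a j • f j) x ^ 2 ∂μ = ∑ j, a j ^ 2 := by
  have hint : ∀ j k, Integrable (fun x => a j * a k * (f j x * f k x)) μ := fun j k =>
    ((hf j).integrable_mul (hf k)).const_mul _
  simp only [Finset.sum_apply, Pi.smul_apply, smul_eq_mul, sq, Finset.sum_mul_sum]
  simp_rw [show ∀ j k x, a j * f j x * (a k * f k x) = a j * a k * (f j x * f k x) by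
    intros; ring]
  rw [integral_finsetSum _ fun j _ => integrable_finsetSum _ fun k _ => hint j k]
  simp_rw [integral_finsetSum _ fun k _ => hint _ k, integral_const_mul, horth]
  simp

theorem unitSphere_span_eq_image (hf : ∀ j, MemLp (f j) 2 μ)
    (horth : ∀ j k, ∫ x, f j x * f k x ∂μ = if j = k then 1 else 0) :
    {ψ | ψ ∈ Submodule.span ℝ (Set.range f) ∧ ∫ x, ψ x ^ 2 ∂μ = 1}
      = (fun a : ι → ℝ => ∑ j, a j • f j) '' {a | ∑ j, a j ^ 2 = 1} := by
  ext ψ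
  simp only [Set.mem_ofPred_eq, Set.mem_image, Submodule.mem_span_range_iff_exists_fun]
  constructor
  · rintro ⟨⟨a, rfl⟩, hnorm⟩
    exact ⟨a, (integral_sq_sum_smul_of_orthonormal hf horth a).symm.trans hnorm, rfl⟩
  · rintro ⟨a, hnorm, rfl⟩
    exact ⟨⟨a, rfl⟩, (integral_sq_sum_smul_of_orthonormal hf horth a).trans hnorm⟩

theorem isGreatest_sq_image_unitSphere_span [Nonempty ι] (hf : ∀ j, MemLp (f j) 2 μ)
    (horth : ∀ j k, ∫ x, f j x * f k x ∂μ = if j = k then 1 else 0) {ℓ : (α → ℝ) → ℝ}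
    (hℓ : ∀ a : ι → ℝ, ℓ (∑ j, a j • f j) = ∑ j, a j * ℓ (f j)) :
    IsGreatest ((fun ψ => ℓ ψ ^ 2) ''
        {ψ | ψ ∈ Submodule.span ℝ (Set.range f) ∧ ∫ x, ψ x ^ 2 ∂μ = 1})
      (∑ j, ℓ (f j) ^ 2) := by
  rw [unitSphere_span_eq_image hf horth, Set.image_image]
  simp only [hℓ]
  exact isGreatest_sq_sum_mul_of_sum_sq_eq_one _

end Orthonormal

theorem sq_integral_sqrt_le_integral {Ω : Type*} [MeasurableSpace Ω] {P : Measure Ω}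
    [IsProbabilityMeasure P] {g : Ω → ℝ} (hg : Integrable g P) (hg0 : 0 ≤ g) :
    (∫ ω, √(g ω) ∂P) ^ 2 ≤ ∫ ω, g ω ∂P := by
  have hsqrt : MemLp (fun ω => √(g ω)) 2 P :=
    (memLp_two_iff_integrable_sq (continuous_sqrt.comp_aestronglyMeasurable hg.1)).2 <|
      hg.congr (.of_forall fun ω => (sq_sqrt (hg0 ω)).symm)
  have := ProbabilityTheory.variance_nonneg (fun ω => √(g ω)) P
  rw [ProbabilityTheory.variance_eq_sub hsqrt] at this
  simpa [sq_sqrt (hg0 _)] using this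

noncomputable def centeredEmpiricalMean {Ω : Type*} [MeasurableSpace Ω] (P : Measure Ω) {n : ℕ}
    (X : Fin n → Ω → ℝ) (ψ : ℝ → ℝ) (ω : Ω) : ℝ :=
  (n : ℝ)⁻¹ * ∑ i, (ψ (X i ω) - ∫ ω', ψ (X i ω') ∂P)

section CenteredEmpiricalMean

variable {Ω : Type*} [MeasurableSpace Ω] {P : Measure Ω} {n : ℕ} {X : Fin n → Ω → ℝ}

theorem centeredEmpiricalMean_sum_smul {ι : Type*} (s : Finset ι) (a : ι → ℝ) {ψ : ι → ℝ → ℝ}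
    (hψ : ∀ j ∈ s, ∀ i, Integrable (fun ω => ψ j (X i ω)) P) (ω : Ω) :
    centeredEmpiricalMean P X (∑ j ∈ s, a j • ψ j) ω
      = ∑ j ∈ s, a j * centeredEmpiricalMean P X (ψ j) ω := by
  have hmean : ∀ i, ∫ ω', ∑ j ∈ s, a j * ψ j (X i ω') ∂P
      = ∑ j ∈ s, a j * ∫ ω', ψ j (X i ω') ∂P := fun i => by
    rw [integral_finsetSum s fun j hj => (hψ j hj i).const_mul (a j)]
    simp only [integral_const_mul]
  simp only [centeredEmpiricalMean, Finset.sum_apply, Pi.smul_apply, smul_eq_mul, hmean,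
    ← Finset.sum_sub_distrib, ← mul_sub, Finset.mul_sum]
  rw [Finset.sum_comm]
  exact Finset.sum_congr rfl fun j _ => Finset.sum_congr rfl fun i _ => by ring

theorem centeredEmpiricalMean_const [IsProbabilityMeasure P] (b : ℝ) (ω : Ω) :
    centeredEmpiricalMean P X (fun _ => b) ω = 0 := by
  simp [centeredEmpiricalMean]

theorem measurable_centeredEmpiricalMean (hX : ∀ i, Measurable (X i)) {ψ : ℝ → ℝ}
    (hψ : Measurable ψ) : Measurable (centeredEmpiricalMean P X ψ) :=
  (Finset.measurable_sum _ fun i _ => (hψ.comp (hX i)).sub_const _).const_mul _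

theorem isGreatest_centeredEmpiricalMean_sq_image_unitSphere {μ : Measure ℝ} {m : ℕ}
    (hm : 0 < m) {φ : ℕ → ℝ → ℝ} (hφ : ∀ j < m, AEStronglyMeasurable (φ j) μ)
    (horth : ∀ j < m, ∀ k < m, ∫ x, φ j x * φ k x ∂μ = if j = k then 1 else 0)
    (hφX : ∀ j < m, ∀ i, Integrable (fun ω => φ j (X i ω)) P) (ω : Ω) :
    IsGreatest ((fun ψ => centeredEmpiricalMean P X ψ ω ^ 2) ''
        {ψ | ψ ∈ Submodule.span ℝ (φ '' Set.Iio m) ∧ ∫ x, ψ x ^ 2 ∂μ = 1})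
      (∑ j ∈ Finset.range m, centeredEmpiricalMean P X (φ j) ω ^ 2) := by
  have : Nonempty (Fin m) := ⟨⟨0, hm⟩⟩
  have hspan : φ '' Set.Iio m = Set.range fun j : Fin m => φ j := by
    rw [← Fin.range_val, ← Set.range_comp]; rfl
  rw [hspan, ← Fin.sum_univ_eq_sum_range]
  exact isGreatest_sq_image_unitSphere_span
    (fun j : Fin m => memLp_two_of_integral_mul_self_ne_zero_s11 (hφ j j.2)
      (by simp [horth j j.2 j j.2]))
    (fun j k : Fin m => by simpa [Fin.val_inj] using horth j j.2 k k.2)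
    fun a => centeredEmpiricalMean_sum_smul _ a (fun j _ => hφX j j.2) ω

theorem lintegral_centeredEmpiricalMean_sq_le [IsProbabilityMeasure P] (hX : ∀ i, Measurable (X i))
    {ψ : ℝ → ℝ} {K : ℝ≥0} (hψ : LipschitzWith K ψ) {c T : ℝ} (hc : 0 < c) (hT : 0 < T)
    (htail : ∀ r > 0, P {ω | |centeredEmpiricalMean P X ψ ω| > r}
      ≤ ENNReal.ofReal (2 * exp (-(r ^ 2 / (c * K ^ 2)) * T))) :
    ∫⁻ ω, ENNReal.ofReal (centeredEmpiricalMean P X ψ ω ^ 2) ∂P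
      ≤ ENNReal.ofReal (2 * c * K ^ 2 / T) := by
  rcases (zero_le (a := K)).eq_or_lt with hK | hK
  · -- the tail bound is void here (`r ^ 2 / 0 = 0`), but `ψ` is constant, so `ν_n(ψ) = 0`
    have hconst : ψ = fun _ => ψ 0 := funext fun x => (LipschitzWith.zero_iff ψ).1 (hK ▸ hψ) x 0
    rw [hconst]
    simp [centeredEmpiricalMean_const]
  · have hA : 0 < T / (c * K ^ 2) := by positivity
    convert lintegral_sq_le_of_tail_le
      (measurable_centeredEmpiricalMean hX hψ.continuous.measurable).aemeasurable hA
      fun r hr => (htail r hr).trans_eq (by ring_nf) using 2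
    field_simp

theorem integrable_centeredEmpiricalMean_sq [IsProbabilityMeasure P] (hX : ∀ i, Measurable (X i))
    {ψ : ℝ → ℝ} {K : ℝ≥0} (hψ : LipschitzWith K ψ) {c T : ℝ} (hc : 0 < c) (hT : 0 < T)
    (htail : ∀ r > 0, P {ω | |centeredEmpiricalMean P X ψ ω| > r}
      ≤ ENNReal.ofReal (2 * exp (-(r ^ 2 / (c * K ^ 2)) * T))) :
    Integrable (fun ω => centeredEmpiricalMean P X ψ ω ^ 2) P := by
  have hmeas := measurable_centeredEmpiricalMean (P := P) hX hψ.continuous.measurable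
  exact integrable_of_lintegral_ofReal_le (.of_forall fun _ => sq_nonneg _)
    (hmeas.pow_const 2).aestronglyMeasurable
    (lintegral_centeredEmpiricalMean_sq_le hX hψ hc hT htail)

theorem integral_centeredEmpiricalMean_sq_le [IsProbabilityMeasure P] (hX : ∀ i, Measurable (X i))
    {ψ : ℝ → ℝ} {K : ℝ≥0} (hψ : LipschitzWith K ψ) {c T : ℝ} (hc : 0 < c) (hT : 0 < T)
    (htail : ∀ r > 0, P {ω | |centeredEmpiricalMean P X ψ ω| > r}
      ≤ ENNReal.ofReal (2 * exp (-(r ^ 2 / (c * K ^ 2)) * T))) :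
    ∫ ω, centeredEmpiricalMean P X ψ ω ^ 2 ∂P ≤ 2 * c * K ^ 2 / T := by
  have hmeas := measurable_centeredEmpiricalMean (P := P) hX hψ.continuous.measurable
  exact integral_le_of_lintegral_ofReal_le (.of_forall fun _ => sq_nonneg _)
    (hmeas.pow_const 2).aestronglyMeasurable (by positivity)
    (lintegral_centeredEmpiricalMean_sq_le hX hψ hc hT htail)

end CenteredEmpiricalMean

theorem expected_sup_sq_empirical_process_general
    {Ω : Type*} [MeasurableSpace Ω] (P : Measure Ω) [IsProbabilityMeasure P]
    (I : Set ℝ)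
    (m n : ℕ) (hm : 1 ≤ m) (hn : 1 ≤ n)
    (φ : ℕ → ℝ → ℝ) (K : ℕ → ℝ≥0)
    (hbdd : ∀ j < m, ∃ Cb : ℝ, ∀ x, |φ j x| ≤ Cb)
    (hlip : ∀ j < m, LipschitzWith (K j) (φ j))
    (horth : ∀ j < m, ∀ k < m, (∫ x in I, φ j x * φ k x) = if j = k then (1 : ℝ) else 0)
    (L : ℝ) (hL : L = ∑ j ∈ Finset.range m, (K j : ℝ) ^ 2)
    (X : Fin n → Ω → ℝ) (hX : ∀ i, Measurable (X i))
    -- hypothesis (C')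
    (c Δ bH : ℝ) (hc : 0 < c) (hΔ : 0 < Δ)
    (hC' : ∀ (ψ : ℝ → ℝ) (Kψ : ℝ≥0), LipschitzWith Kψ ψ →
        (∀ i, Integrable (fun ω => ψ (X i ω)) P) →
        ∀ r > (0 : ℝ),
          P {ω | |(n : ℝ)⁻¹ * ∑ i, (ψ (X i ω) - ∫ ω', ψ (X i ω') ∂P)| > r}
            ≤ ENNReal.ofReal
                (2 * Real.exp (-(r ^ 2 / (c * (Kψ : ℝ) ^ 2)) * ((n : ℝ) * Δ) ^ bH)))
    -- the empirical process and the unit sphere of the model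
    (ν : Ω → (ℝ → ℝ) → ℝ)
    (hν : ∀ ω ψ, ν ω ψ = (n : ℝ)⁻¹ * ∑ i, (ψ (X i ω) - ∫ ω', ψ (X i ω') ∂P))
    (𝓕m : Set (ℝ → ℝ))
    (h𝓕m : 𝓕m = {ψ | ψ ∈ Submodule.span ℝ (φ '' Set.Iio m)
      ∧ (∫ x in I, (ψ x) ^ 2) = 1}) :
    (∫ ω, sSup ((fun ψ : ℝ → ℝ => (ν ω ψ) ^ 2) '' 𝓕m) ∂P)
        = ∑ j ∈ Finset.range m, ∫ ω, (ν ω (φ j)) ^ 2 ∂P ∧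
    (∑ j ∈ Finset.range m, ∫ ω, (ν ω (φ j)) ^ 2 ∂P)
        ≤ 2 * c * L / ((n : ℝ) * Δ) ^ bH ∧
    (∫ ω, sSup ((fun ψ : ℝ → ℝ => |ν ω ψ|) '' 𝓕m) ∂P) ^ 2
        ≤ 2 * c * L / ((n : ℝ) * Δ) ^ bH := by
  obtain rfl : ν = fun ω ψ => centeredEmpiricalMean P X ψ ω := funext₂ hν
  subst hL h𝓕m
  dsimp only
  have hT : 0 < ((n : ℝ) * Δ) ^ bH := by
    have : (0 : ℝ) < n := by exact_mod_cast hn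
    positivity
  have hφX : ∀ j < m, ∀ i, Integrable (fun ω => φ j (X i ω)) P := fun j hj i =>
    let ⟨C, hC⟩ := hbdd j hj
    .of_bound ((hlip j hj).continuous.measurable.comp (hX i)).aestronglyMeasurable C
      (.of_forall fun ω => hC _)
  have hsup := isGreatest_centeredEmpiricalMean_sq_image_unitSphere (X := X) hm
    (fun j hj => (hlip j hj).continuous.aestronglyMeasurable) horth hφX
  simp_rw [(hsup _).csSup_eq, (hsup _).abs_image_of_sq_image.csSup_eq]
  have hconc (j : ℕ) (hj : j < m) := hC' _ _ (hlip j hj) (hφX j hj)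
  have hint (j : ℕ) (hj : j ∈ Finset.range m) :=
    integrable_centeredEmpiricalMean_sq hX (hlip j (Finset.mem_range.1 hj)) hc hT
      (hconc j (Finset.mem_range.1 hj))
  have hsum := integral_finsetSum (μ := P) _ hint
  have hle : ∑ j ∈ Finset.range m, ∫ ω, centeredEmpiricalMean P X (φ j) ω ^ 2 ∂P
      ≤ 2 * c * (∑ j ∈ Finset.range m, (K j : ℝ) ^ 2) / ((n : ℝ) * Δ) ^ bH := by
    rw [Finset.mul_sum, Finset.sum_div]
    exact Finset.sum_le_sum fun j hj => integral_centeredEmpiricalMean_sq_le hX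
      (hlip j (Finset.mem_range.1 hj)) hc hT (hconc j (Finset.mem_range.1 hj))
  refine ⟨hsum, hle, ?_⟩
  calc _ ≤ _ := sq_integral_sqrt_le_integral (integrable_finsetSum _ hint)
        fun ω => Finset.sum_nonneg fun j _ => sq_nonneg _
    _ ≤ _ := hsum ▸ hle

/-- Expected supremum of the squared empirical process over the unit sphere `𝓕_m` of the
model `S_m`: it equals `∑_j E[ν_n(φ_j)²]` and is bounded by `2cL(m)/(nΔ)^{b_H}`; in
particular `(E[sup_{𝓕_m} |ν_n|])² ≤ 2cL(m)/(nΔ)^{b_H}`. -/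
theorem expected_sup_sq_empirical_process
    {Ω : Type*} [MeasurableSpace Ω] (P : Measure Ω) [IsProbabilityMeasure P]
    (I : Set ℝ) (hImeas : MeasurableSet I) (hIint : I.OrdConnected)
    (m n : ℕ) (hm : 1 ≤ m) (hn : 1 ≤ n)
    (φ : ℕ → ℝ → ℝ) (K : ℕ → ℝ≥0)
    (hbdd : ∀ j < m, ∃ Cb : ℝ, ∀ x, |φ j x| ≤ Cb)
    (hlip : ∀ j < m, LipschitzWith (K j) (φ j))
    (hsupp : ∀ j < m, ∀ x ∉ I, φ j x = 0)
    (horth : ∀ j < m, ∀ k < m, (∫ x in I, φ j x * φ k x) = if j = k then (1 : ℝ) else 0)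
    (L : ℝ) (hL : L = ∑ j ∈ Finset.range m, (K j : ℝ) ^ 2)
    (X : Fin n → Ω → ℝ) (hX : ∀ i, Measurable (X i))
    -- hypothesis (C')
    (c Δ H bH : ℝ) (hc : 0 < c) (hΔ : 0 < Δ) (hH : H ∈ Set.Ioo (0 : ℝ) 1)
    (hbH : bH = min 1 (2 - 2 * H))
    (hC' : ∀ (ψ : ℝ → ℝ) (Kψ : ℝ≥0), LipschitzWith Kψ ψ →
        (∀ i, Integrable (fun ω => ψ (X i ω)) P) →
        ∀ r > (0 : ℝ),
          P {ω | |(n : ℝ)⁻¹ * ∑ i, (ψ (X i ω) - ∫ ω', ψ (X i ω') ∂P)| > r}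
            ≤ ENNReal.ofReal
                (2 * Real.exp (-(r ^ 2 / (c * (Kψ : ℝ) ^ 2)) * ((n : ℝ) * Δ) ^ bH)))
    -- the empirical process and the unit sphere of the model
    (ν : Ω → (ℝ → ℝ) → ℝ)
    (hν : ∀ ω ψ, ν ω ψ = (n : ℝ)⁻¹ * ∑ i, (ψ (X i ω) - ∫ ω', ψ (X i ω') ∂P))
    (𝓕m : Set (ℝ → ℝ))
    (h𝓕m : 𝓕m = {ψ | ψ ∈ Submodule.span ℝ (φ '' Set.Iio m)
      ∧ (∫ x in I, (ψ x) ^ 2) = 1}) :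
    (∫ ω, sSup ((fun ψ : ℝ → ℝ => (ν ω ψ) ^ 2) '' 𝓕m) ∂P)
        = ∑ j ∈ Finset.range m, ∫ ω, (ν ω (φ j)) ^ 2 ∂P ∧
    (∑ j ∈ Finset.range m, ∫ ω, (ν ω (φ j)) ^ 2 ∂P)
        ≤ 2 * c * L / ((n : ℝ) * Δ) ^ bH ∧
    (∫ ω, sSup ((fun ψ : ℝ → ℝ => |ν ω ψ|) '' 𝓕m) ∂P) ^ 2
        ≤ 2 * c * L / ((n : ℝ) * Δ) ^ bH :=
  expected_sup_sq_empirical_process_general P I m n hm hn φ K hbdd hlip horth L hL X hX c Δ bH hc hΔ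
    hC' ν hν 𝓕m h𝓕m
end
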